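/- arXiv:1408.2043 — 2 statements merged into one kernel-verified Lean document; each statement's English description precedes it below -/
import Mathlib

section
/- Let k ∈ (0,1) and n ∈ ℤ. The function g₁(u) = E(u,k) − tan u·√(1−k²sin²u) is strictly decreasing on the interval ((2n−1)π/2, (2n+1)π/2); moreover g₁(u) → +∞ as u → ((2n−1)π/2)⁺ and g₁(u) → −∞ as u → ((2n+1)π/2)⁻. (Monotonicity and boundary behaviour of g₁ = f₁/cn used to prove uniqueness of the roots of f₁.) -/
open Real Filter

/-- Incomplete elliptic integral of the second kind in Legendre form:
`E(u,k) = ∫₀ᵘ √(1 − k² sin² φ) dφ`. -/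
noncomputable def EllE (u k : ℝ) : ℝ :=
  ∫ φ in (0:ℝ)..u, Real.sqrt (1 - k ^ 2 * Real.sin φ ^ 2)

/-!
Since `(tan u)' = 1 + tan² u` and `(1 − k² sin² u)' = −2k² sin u cos u`, one finds
`g₁'(u) = −(1 − k²) tan² u / √(1 − k² sin² u)`, which is negative on the interval except at its
midpoint `nπ`, so `g₁` is strictly decreasing there. At the endpoints `E(·,k)` and
`√(1 − k² sin² ·)` are continuous, the latter positive, while `tan` tends to `∓∞`.
-/

open Set Topology

theorem strictAntiOn_Ioo_of_deriv_neg_of_ne {f : ℝ → ℝ} {a b c : ℝ} (hc : c ∈ Ioo a b)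
    (hf : ContinuousOn f (Ioo a b)) (hf' : ∀ x ∈ Ioo a b, x ≠ c → deriv f x < 0) :
    StrictAntiOn f (Ioo a b) := by
  rw [← Ioc_union_Ico_eq_Ioo hc.1 hc.2]
  refine StrictAntiOn.union ?_ ?_ (isGreatest_Ioc hc.1) (isLeast_Ico hc.2)
  · refine strictAntiOn_of_deriv_neg (convex_Ioc a c)
      (hf.mono (Ioc_subset_Ioo_right hc.2)) fun x hx => ?_
    rw [interior_Ioc] at hx
    exact hf' x ⟨hx.1, hx.2.trans hc.2⟩ hx.2.ne
  · refine strictAntiOn_of_deriv_neg (convex_Ico c b)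
      (hf.mono (Ico_subset_Ioo_left hc.1)) fun x hx => ?_
    rw [interior_Ico] at hx
    exact hf' x ⟨hc.1.trans hx.1, hx.2⟩ hx.1.ne'

section Trigonometric

variable {n : ℤ} {u : ℝ}

theorem sub_int_mul_pi_mem_Ioo
    (hu : u ∈ Ioo ((2 * (n : ℝ) - 1) * π / 2) ((2 * (n : ℝ) + 1) * π / 2)) :
    u - n * π ∈ Ioo (-(π / 2)) (π / 2) :=
  ⟨by linarith [hu.1], by linarith [hu.2]⟩

theorem cos_ne_zero_of_mem_Ioo
    (hu : u ∈ Ioo ((2 * (n : ℝ) - 1) * π / 2) ((2 * (n : ℝ) + 1) * π / 2)) : cos u ≠ 0 := by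
  have h := (cos_pos_of_mem_Ioo (sub_int_mul_pi_mem_Ioo hu)).ne'
  rw [cos_sub_int_mul_pi] at h
  exact right_ne_zero_of_mul h

theorem tan_ne_zero_of_mem_Ioo
    (hu : u ∈ Ioo ((2 * (n : ℝ) - 1) * π / 2) ((2 * (n : ℝ) + 1) * π / 2)) (hne : u ≠ n * π) :
    tan u ≠ 0 := by
  intro h
  rw [← tan_sub_int_mul_pi u n, ← tan_zero] at h
  have hzero : (0 : ℝ) ∈ Ioo (-(π / 2)) (π / 2) := ⟨by linarith [pi_pos], by linarith [pi_pos]⟩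
  exact hne (sub_eq_zero.1 (injOn_tan (sub_int_mul_pi_mem_Ioo hu) hzero h))

theorem tendsto_tan_nhdsGT_odd_mul_pi_div_two (n : ℤ) :
    Tendsto tan (𝓝[>] ((2 * (n : ℝ) - 1) * π / 2)) atBot := by
  have hshift : Tendsto (· - n * π) (𝓝[>] ((2 * (n : ℝ) - 1) * π / 2)) (𝓝[>] (-(π / 2))) := by
    rw [show -(π / 2) = (2 * (n : ℝ) - 1) * π / 2 - n * π by ring]
    exact map_subRight_nhdsGT.le
  exact (tendsto_tan_neg_pi_div_two.comp hshift).congr fun x => tan_sub_int_mul_pi x n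

theorem tendsto_tan_nhdsLT_odd_mul_pi_div_two (n : ℤ) :
    Tendsto tan (𝓝[<] ((2 * (n : ℝ) + 1) * π / 2)) atTop := by
  have hshift : Tendsto (· - n * π) (𝓝[<] ((2 * (n : ℝ) + 1) * π / 2)) (𝓝[<] (π / 2)) := by
    rw [show π / 2 = (2 * (n : ℝ) + 1) * π / 2 - n * π by ring]
    exact map_subRight_nhdsLT.le
  exact (tendsto_tan_pi_div_two.comp hshift).congr fun x => tan_sub_int_mul_pi x n

end Trigonometric

section G1

variable {k : ℝ}

theorem one_sub_sq_mul_sin_sq_pos (hk : k ^ 2 < 1) (u : ℝ) : 0 < 1 - k ^ 2 * sin u ^ 2 := by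
  nlinarith [sin_sq_le_one u, sq_nonneg k]

theorem continuous_sqrt_one_sub_sq_mul_sin_sq (k : ℝ) :
    Continuous fun φ => √(1 - k ^ 2 * sin φ ^ 2) := by
  fun_prop

theorem hasDerivAt_EllE (k u : ℝ) : HasDerivAt (EllE · k) (√(1 - k ^ 2 * sin u ^ 2)) u :=
  ((continuous_sqrt_one_sub_sq_mul_sin_sq k).integral_hasStrictDerivAt 0 u).hasDerivAt

theorem continuous_EllE (k : ℝ) : Continuous (EllE · k) :=
  continuous_iff_continuousAt.2 fun u => (hasDerivAt_EllE k u).continuousAt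

noncomputable def EllG1 (k u : ℝ) : ℝ := EllE u k - tan u * √(1 - k ^ 2 * sin u ^ 2)

theorem hasDerivAt_EllG1 (hk : k ^ 2 < 1) {u : ℝ} (hu : cos u ≠ 0) :
    HasDerivAt (EllG1 k) (-(1 - k ^ 2) * tan u ^ 2 / √(1 - k ^ 2 * sin u ^ 2)) u := by
  have hP := one_sub_sq_mul_sin_sq_pos hk u
  have hP' : HasDerivAt (fun u => 1 - k ^ 2 * sin u ^ 2) (-(k ^ 2 * (2 * sin u * cos u))) u := by
    simpa using ((hasDerivAt_sin u).pow 2).const_mul (k ^ 2) |>.const_sub 1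
  refine ((hasDerivAt_EllE k u).sub ((hasDerivAt_tan hu).mul (hP'.sqrt hP.ne'))).congr_deriv ?_
  have hsqrt : √(1 - k ^ 2 * sin u ^ 2) ^ 2 = 1 - k ^ 2 * sin u ^ 2 := sq_sqrt hP.le
  rw [tan_eq_sin_div_cos]
  field_simp
  linear_combination (cos u ^ 2 - 1) * hsqrt + sin_sq_add_cos_sq u

theorem EllG1_strictAntiOn (hk : k ^ 2 < 1) (n : ℤ) :
    StrictAntiOn (EllG1 k) (Ioo ((2 * (n : ℝ) - 1) * π / 2) ((2 * (n : ℝ) + 1) * π / 2)) := by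
  have hmid : (n : ℝ) * π ∈ Ioo ((2 * (n : ℝ) - 1) * π / 2) ((2 * (n : ℝ) + 1) * π / 2) :=
    ⟨by linarith [pi_pos], by linarith [pi_pos]⟩
  refine strictAntiOn_Ioo_of_deriv_neg_of_ne hmid
    (fun u hu => (hasDerivAt_EllG1 hk (cos_ne_zero_of_mem_Ioo hu)).continuousAt.continuousWithinAt)
    fun u hu hne => ?_
  rw [(hasDerivAt_EllG1 hk (cos_ne_zero_of_mem_Ioo hu)).deriv]
  have htan : 0 < tan u ^ 2 := by have := tan_ne_zero_of_mem_Ioo hu hne; positivity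
  have hsqrt : 0 < √(1 - k ^ 2 * sin u ^ 2) := sqrt_pos.2 (one_sub_sq_mul_sin_sq_pos hk u)
  exact div_neg_of_neg_of_pos (mul_neg_of_neg_of_pos (by linarith) htan) hsqrt

theorem tendsto_EllG1_atTop (hk : k ^ 2 < 1) {l : Filter ℝ} {c : ℝ} (hl : l ≤ 𝓝 c)
    (htan : Tendsto tan l atBot) : Tendsto (EllG1 k) l atTop := by
  have hE := ((continuous_EllE k).tendsto c).mono_left hl
  have hsqrt := ((continuous_sqrt_one_sub_sq_mul_sin_sq k).tendsto c).mono_left hl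
  have hprod := htan.atBot_mul_pos (sqrt_pos.2 (one_sub_sq_mul_sin_sq_pos hk c)) hsqrt
  exact (hE.add_atTop (tendsto_neg_atBot_atTop.comp hprod)).congr fun u => (sub_eq_add_neg _ _).symm

theorem tendsto_EllG1_atBot (hk : k ^ 2 < 1) {l : Filter ℝ} {c : ℝ} (hl : l ≤ 𝓝 c)
    (htan : Tendsto tan l atTop) : Tendsto (EllG1 k) l atBot := by
  have hE := ((continuous_EllE k).tendsto c).mono_left hl
  have hsqrt := ((continuous_sqrt_one_sub_sq_mul_sin_sq k).tendsto c).mono_left hl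
  have hprod := htan.atTop_mul_pos (sqrt_pos.2 (one_sub_sq_mul_sin_sq_pos hk c)) hsqrt
  exact (hE.add_atBot (tendsto_neg_atTop_atBot.comp hprod)).congr fun u => (sub_eq_add_neg _ _).symm

end G1

/-- For `k ∈ (0,1)` and `n ∈ ℤ`, the function
`g₁(u) = E(u,k) − tan u · √(1 − k² sin² u)` is strictly decreasing on
`((2n−1)π/2, (2n+1)π/2)`, tends to `+∞` as `u → ((2n−1)π/2)⁺` and to `−∞`
as `u → ((2n+1)π/2)⁻`. -/
theorem g1_strictAnti_and_limits (k : ℝ) (hk : k ∈ Set.Ioo (0:ℝ) 1) (n : ℤ) :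
    StrictAntiOn
      (fun u : ℝ => EllE u k - Real.tan u * Real.sqrt (1 - k ^ 2 * Real.sin u ^ 2))
      (Set.Ioo ((2 * (n:ℝ) - 1) * π / 2) ((2 * (n:ℝ) + 1) * π / 2)) ∧
    Tendsto (fun u : ℝ => EllE u k - Real.tan u * Real.sqrt (1 - k ^ 2 * Real.sin u ^ 2))
      (nhdsWithin ((2 * (n:ℝ) - 1) * π / 2) (Set.Ioi ((2 * (n:ℝ) - 1) * π / 2))) atTop ∧
    Tendsto (fun u : ℝ => EllE u k - Real.tan u * Real.sqrt (1 - k ^ 2 * Real.sin u ^ 2))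
      (nhdsWithin ((2 * (n:ℝ) + 1) * π / 2) (Set.Iio ((2 * (n:ℝ) + 1) * π / 2))) atBot := by
  have hk2 : k ^ 2 < 1 := by nlinarith [hk.1, hk.2]
  exact ⟨EllG1_strictAntiOn hk2 n,
    tendsto_EllG1_atTop hk2 nhdsWithin_le_nhds (tendsto_tan_nhdsGT_odd_mul_pi_div_two n),
    tendsto_EllG1_atBot hk2 nhdsWithin_le_nhds (tendsto_tan_nhdsLT_odd_mul_pi_div_two n)⟩
end

section
/- Let s₁, s₂ ∈ {−1,1}, φ ∈ ℝ, and t > 0, and let (x_t, y_t, z_t) be given by x_t = (s₁/2)[(1/w)(φ_t−φ) + w(tanh φ_t − tanh φ)], y_t = (s₂/2)[(1/w)(φ_t−φ) − w(tanh φ_t − tanh φ)], z_t = −s₁s₂·ln(w/cosh φ_t), where φ_t = φ + t and w = cosh φ. Then y_t·cosh(z_t/2) − x_t·sinh(z_t/2) ≠ 0 and x_t·cosh(z_t/2) − y_t·sinh(z_t/2) ≠ 0. (For λ ∈ C₃ and t > 0 the equations R₁(q_t) = 0 and R₂(q_t) = 0 are impossible, since 2p − sinh 2p < 0 and 2p +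 sinh 2p > 0 for p = t/2 > 0.) -/
/-!
Put `A = t / cosh φ`, `B = cosh φ · (tanh φ_t − tanh φ)` and `e^ζ = √(cosh φ_t / cosh φ)`, so that
`z_t / 2 = s₁ s₂ ζ`. Since the signs square to one, the two reflection functions collapse to
`R₁ = (s₂ / 2)(A e^{−ζ} − B e^{ζ})` and `R₂ = (s₁ / 2)(A e^{−ζ} + B e^{ζ})`, and the addition formula
for `sinh` together with `e^{2ζ} = cosh φ_t / cosh φ` gives `B e^{ζ} = sinh t · e^{−ζ} / cosh φ`.
Hence `R₁` and `R₂` are nonzero multiples of `t − sinh t < 0` and `t + sinh t > 0`.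
-/

open Real

lemma cosh_sign_mul {ε : ℝ} (hε : ε = -1 ∨ ε = 1) (ζ : ℝ) : cosh (ε * ζ) = cosh ζ := by
  rcases hε with rfl | rfl <;> simp

lemma sinh_sign_mul {ε : ℝ} (hε : ε = -1 ∨ ε = 1) (ζ : ℝ) : sinh (ε * ζ) = ε * sinh ζ := by
  rcases hε with rfl | rfl <;> simp

lemma sign_mul_sign {s₁ s₂ : ℝ} (hs₁ : s₁ = -1 ∨ s₁ = 1) (hs₂ : s₂ = -1 ∨ s₂ = 1) :
    s₁ * s₂ = -1 ∨ s₁ * s₂ = 1 := by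
  rcases hs₁ with rfl | rfl <;> rcases hs₂ with rfl | rfl <;> norm_num

lemma sign_sq {s : ℝ} (hs : s = -1 ∨ s = 1) : s ^ 2 = 1 := by
  rcases hs with rfl | rfl <;> norm_num

lemma sign_mul_sub_cosh_sub_sinh {s₁ s₂ : ℝ} (hs₁ : s₁ = -1 ∨ s₁ = 1) (hs₂ : s₂ = -1 ∨ s₂ = 1)
    (a b ζ : ℝ) :
    s₂ / 2 * (a - b) * cosh (s₁ * s₂ * ζ) - s₁ / 2 * (a + b) * sinh (s₁ * s₂ * ζ)
      = s₂ / 2 * (a * exp (-ζ) - b * exp ζ) := by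
  rw [cosh_sign_mul (sign_mul_sign hs₁ hs₂), sinh_sign_mul (sign_mul_sign hs₁ hs₂), cosh_eq,
    sinh_eq]
  linear_combination -(a + b) * s₂ * (exp ζ - exp (-ζ)) / 4 * sign_sq hs₁

lemma sign_mul_add_cosh_sub_sinh {s₁ s₂ : ℝ} (hs₁ : s₁ = -1 ∨ s₁ = 1) (hs₂ : s₂ = -1 ∨ s₂ = 1)
    (a b ζ : ℝ) :
    s₁ / 2 * (a + b) * cosh (s₁ * s₂ * ζ) - s₂ / 2 * (a - b) * sinh (s₁ * s₂ * ζ)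
      = s₁ / 2 * (a * exp (-ζ) + b * exp ζ) := by
  rw [cosh_sign_mul (sign_mul_sign hs₁ hs₂), sinh_sign_mul (sign_mul_sign hs₁ hs₂), cosh_eq,
    sinh_eq]
  linear_combination -(a - b) * s₁ * (exp ζ - exp (-ζ)) / 4 * sign_sq hs₂

lemma tanh_add_sub_tanh (φ t : ℝ) :
    tanh (φ + t) - tanh φ = sinh t / (cosh φ * cosh (φ + t)) := by
  have hsub : sinh t = sinh (φ + t) * cosh φ - cosh (φ + t) * sinh φ := by
    rw [← sinh_sub, add_sub_cancel_left]
  rw [tanh_eq_sinh_div_cosh, tanh_eq_sinh_div_cosh, hsub]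
  field_simp [(cosh_pos φ).ne', (cosh_pos (φ + t)).ne']

lemma cosh_mul_tanh_add_sub_tanh_mul_exp {φ t ζ : ℝ}
    (hζ : exp ζ ^ 2 * cosh φ = cosh (φ + t)) :
    cosh φ * (tanh (φ + t) - tanh φ) * exp ζ = sinh t * exp (-ζ) / cosh φ := by
  rw [tanh_add_sub_tanh, ← hζ, exp_neg]
  field_simp [(cosh_pos φ).ne', (exp_pos ζ).ne']

/-- For `λ ∈ C₃` and `t > 0`, the equations `R₁(q_t) = 0` and `R₂(q_t) = 0` are
impossible along the extremal trajectory `(x_t, y_t, z_t)`. -/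
theorem R1_R2_nonzero_C3 (s₁ s₂ : ℝ) (hs₁ : s₁ = -1 ∨ s₁ = 1) (hs₂ : s₂ = -1 ∨ s₂ = 1)
    (φ t : ℝ) (ht : 0 < t) :
    let φt : ℝ := φ + t
    let w : ℝ := Real.cosh φ
    let x : ℝ := s₁ / 2 * ((1 / w) * (φt - φ) + w * (Real.tanh φt - Real.tanh φ))
    let y : ℝ := s₂ / 2 * ((1 / w) * (φt - φ) - w * (Real.tanh φt - Real.tanh φ))
    let z : ℝ := -(s₁ * s₂) * Real.log (w / Real.cosh φt)
    (y * Real.cosh (z / 2) - x * Real.sinh (z / 2) ≠ 0) ∧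
    (x * Real.cosh (z / 2) - y * Real.sinh (z / 2) ≠ 0) := by
  intro φt w x y z
  set ζ := log (cosh φt / w) / 2
  have hz : z / 2 = s₁ * s₂ * ζ := by
    simp only [z, ζ, ← inv_div (cosh φt), log_inv]
    ring
  have hζ : exp ζ ^ 2 * cosh φ = cosh (φ + t) := by
    rw [← exp_nat_mul, Nat.cast_ofNat, mul_div_cancel₀ _ two_ne_zero,
      exp_log (div_pos (cosh_pos _) (cosh_pos _))]
    exact div_mul_cancel₀ _ (cosh_pos φ).ne'
  have hB := cosh_mul_tanh_add_sub_tanh_mul_exp hζ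
  have hs₁0 : s₁ ≠ 0 := by rcases hs₁ with rfl | rfl <;> norm_num
  have hs₂0 : s₂ ≠ 0 := by rcases hs₂ with rfl | rfl <;> norm_num
  have hpos : 0 < exp (-ζ) / cosh φ := div_pos (exp_pos _) (cosh_pos φ)
  simp only [x, y, hz, φt, w, add_sub_cancel_left, sign_mul_sub_cosh_sub_sinh hs₁ hs₂,
    sign_mul_add_cosh_sub_sinh hs₁ hs₂, hB]
  constructor
  · rw [show 1 / cosh φ * t * exp (-ζ) - sinh t * exp (-ζ) / cosh φ
      = (t - sinh t) * (exp (-ζ) / cosh φ) by ring]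
    exact mul_ne_zero (div_ne_zero hs₂0 two_ne_zero)
      (mul_neg_of_neg_of_pos (sub_neg.2 (self_lt_sinh_iff.2 ht)) hpos).ne
  · rw [show 1 / cosh φ * t * exp (-ζ) + sinh t * exp (-ζ) / cosh φ
      = (t + sinh t) * (exp (-ζ) / cosh φ) by ring]
    exact mul_ne_zero (div_ne_zero hs₁0 two_ne_zero)
      (mul_pos (add_pos ht (sinh_pos_iff.2 ht)) hpos).ne'
end
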